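/- Let n, d be positive integers, F ∈ ℝ^{d×n}, σ > 0, let Γ ∈ ℝ^{n×n} be symmetric positive definite, and let W = diag(w) with w ∈ ℝ^d having nonnegative entries. Then tr((σ^{-2} F^⊤ W F + Γ^{-1})^{-1}) = tr(Γ) − tr(σ^{-2} (I_d + σ^{-2} W F Γ F^⊤)^{-1} W F Γ² F^⊤), where the trace in the second term on the right is of a d×d matrix (an operator on the measurement space). -/

import Mathlib

open Matrix

private lemma aux_woodbury {ι κ : Type*} [Fintype ι] [Fintype κ] [DecidableEq ι] [DecidableEq κ]
    (c : ℝ) (A : Matrix ι ι ℝ) (U : Matrix ι κ ℝ) (V : Matrix κ ι ℝ)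
    (hA : A * A⁻¹ = 1)
    (hB : (1 + c • (V * A * U))⁻¹ * (1 + c • (V * A * U)) = 1) :
    (A - c • (A * U * (1 + c • (V * A * U))⁻¹ * V * A)) * (c • (U * V) + A⁻¹) = 1 := by
  set Bi := (1 + c • (V * A * U))⁻¹ with hBi
  have key : c • (Bi * (V * (A * U))) = 1 - Bi := by
    rw [mul_add, mul_one, mul_smul_comm] at hB
    simp only [Matrix.mul_assoc] at hB
    exact eq_sub_of_add_eq' hB
  have key3 : (c*c) • (A * (U * (Bi * (V * (A * (U * V))))))
      = c • (A * (U * V)) - c • (A * (U * (Bi * V))) := by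
    calc (c*c) • (A * (U * (Bi * (V * (A * (U * V))))))
        = c • (A * (U * ((c • (Bi * (V * (A * U)))) * V))) := by
          simp only [Matrix.smul_mul, Matrix.mul_smul, smul_smul, Matrix.mul_assoc]
      _ = c • (A * (U * ((1 - Bi) * V))) := by rw [key]
      _ = c • (A * (U * V)) - c • (A * (U * (Bi * V))) := by
          simp only [Matrix.sub_mul, Matrix.one_mul, Matrix.mul_sub, smul_sub]
  simp only [Matrix.sub_mul, Matrix.mul_add, Matrix.smul_mul, Matrix.mul_smul, smul_smul,
    Matrix.mul_assoc, hA, Matrix.mul_one, smul_sub]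
  rw [key3]
  abel

/-- Measurement-space reformulation of the A-optimal criterion:
`tr((σ⁻² Fᵀ W F + Γ⁻¹)⁻¹) = tr(Γ) − tr(σ⁻² (I + σ⁻² W F Γ Fᵀ)⁻¹ W F Γ² Fᵀ)`,
where `W = diag w` with nonnegative weights and the second trace is of a `d × d` matrix. -/
theorem aoptimal_trace_measurement_space
    {n d : ℕ} (hn : 0 < n) (hd : 0 < d)
    (F : Matrix (Fin d) (Fin n) ℝ) (σ : ℝ) (hσ : 0 < σ)
    (Γ : Matrix (Fin n) (Fin n) ℝ) (hΓ : Γ.PosDef)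
    (w : Fin d → ℝ) (hw : ∀ i, 0 ≤ w i) :
    (((σ ^ 2)⁻¹ • (Fᵀ * diagonal w * F) + Γ⁻¹)⁻¹).trace =
      Γ.trace - ((σ ^ 2)⁻¹ •
        (((1 : Matrix (Fin d) (Fin d) ℝ) + (σ ^ 2)⁻¹ • (diagonal w * F * Γ * Fᵀ))⁻¹ *
          diagonal w * F * (Γ * Γ) * Fᵀ)).trace := by
  set c : ℝ := (σ ^ 2)⁻¹ with hc
  set W : Matrix (Fin d) (Fin d) ℝ := diagonal w with hW
  set s : Matrix (Fin d) (Fin d) ℝ := diagonal (fun i => Real.sqrt (w i)) with hs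
  have hss : s * s = W := by
    rw [hs, hW, diagonal_mul_diagonal]
    exact congrArg _ (funext fun i => Real.mul_self_sqrt (hw i))
  have hsT : sᵀ = s := diagonal_transpose _
  -- the symmetrized companion matrix `1 + D * s` is positive definite
  set X : Matrix (Fin d) (Fin n) ℝ := σ⁻¹ • (s * F) with hX
  set D : Matrix (Fin d) (Fin d) ℝ := c • (s * F * Γ * Fᵀ) with hD
  have hXX : X * Γ * Xᴴ = D * s := by
    rw [hX, hD, conjTranspose_eq_transpose_of_trivial, transpose_smul, transpose_mul, hsT]
    simp only [Matrix.smul_mul, Matrix.mul_smul, smul_smul, Matrix.mul_assoc]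
    rw [hc, pow_two, mul_inv]
  have hC : (1 + D * s).PosDef := by
    rw [← hXX]
    exact Matrix.PosDef.add_posSemidef Matrix.PosDef.one
      (hΓ.posSemidef.mul_mul_conjTranspose_same X)
  have hCC : (1 + D * s) * (1 + D * s)⁻¹ = 1 :=
    mul_nonsing_inv _ hC.det_pos.ne'.isUnit
  -- B is invertible with explicit inverse
  set B : Matrix (Fin d) (Fin d) ℝ := 1 + c • (W * F * Γ * Fᵀ) with hB
  have hBsD : B = 1 + s * D := by
    rw [hB, hD, ← hss]
    congr 1
    simp only [Matrix.mul_smul, Matrix.mul_assoc]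
  have hBright : B * (1 - s * ((1 + D * s)⁻¹ * D)) = 1 := by
    have hCD : (1 + D * s) * ((1 + D * s)⁻¹ * D) = D := by
      rw [← Matrix.mul_assoc, hCC, Matrix.one_mul]
    have h2 : s * ((1 + D * s)⁻¹ * D) + s * (D * (s * ((1 + D * s)⁻¹ * D))) = s * D := by
      rw [← Matrix.mul_add]
      congr 1
      simpa only [Matrix.add_mul, Matrix.one_mul, Matrix.mul_assoc] using hCD
    rw [hBsD]
    simp only [Matrix.mul_sub, Matrix.add_mul, Matrix.one_mul, Matrix.mul_one, Matrix.mul_assoc]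
    rw [← h2]
    abel
  have hBinvertible : Invertible B := invertibleOfRightInverse B _ hBright
  have hBB : B⁻¹ * B = 1 :=
    nonsing_inv_mul B ((Matrix.isUnit_iff_isUnit_det B).mp (isUnit_of_invertible B))
  have hAA : Γ * Γ⁻¹ = 1 := mul_nonsing_inv Γ hΓ.det_pos.ne'.isUnit
  have hwood := aux_woodbury c Γ Fᵀ (W * F) hAA hBB
  have hMinv : (c • (Fᵀ * (W * F)) + Γ⁻¹)⁻¹
      = Γ - c • (Γ * Fᵀ * B⁻¹ * (W * F) * Γ) := inv_eq_left_inv hwood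
  have htr : (Γ * Fᵀ * B⁻¹ * (W * F) * Γ).trace
      = (B⁻¹ * W * F * (Γ * Γ) * Fᵀ).trace := by
    rw [show Γ * Fᵀ * B⁻¹ * (W * F) * Γ = (Γ * Fᵀ) * (B⁻¹ * (W * F) * Γ) by
      simp only [Matrix.mul_assoc]]
    rw [trace_mul_comm]
    congr 1
    simp only [Matrix.mul_assoc]
  rw [Matrix.mul_assoc Fᵀ W F, hMinv, trace_sub, trace_smul, trace_smul, htr]
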